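/- arXiv:2010.07854 — 3 statements merged into one kernel-verified Lean document; each statement's English description precedes it below -/
import Mathlib

section
/- Let d ∈ ℕ and let W be a distribution-valued bigraphon with uniform marginals (i.e., ∫_Ω W(x,y)(T) dy = λ(T) for almost every x, and symmetrically in y). Let W^d be the step approximation of W of depth d obtained by replacing each value W(x,y) by the measure that assigns to a set X the sum over the 2^d dyadic intervals I of W(x,y)(I)·2^d·λ(X ∩ I). Then the Latinon cut norm of W − W^d is at most 2^{1−d}, where the Latinon cut norm of a signed distribution-valued bigraphon U is sup over measurable R, C ⊆ Ω and intervals V ⊆ [0,1] of |∫_R ∫_C U(x,y)(V) dx dy|. -/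
/-!
Fix a row `x` on which the marginal condition holds and integrate out `y ∈ C`:
`ν(T) = ∫_C W(x,y)(T) dy` is a measure dominated by Lebesgue measure on `[0,1]`, and the inner
integral becomes `ν(V) - ∑ᵢ ν(Iᵢ) 2^d λ(V ∩ Iᵢ)`. Splitting `ν(V)` along the dyadic intervals `Iᵢ`,
an interval that `V` misses or contains contributes nothing, every other one contributes at most
`λ(Iᵢ) = 2^{-d}` in absolute value, and since `V` is an interval it cuts at most two of them.
Integrating the bound `2^{1-d}` over `x ∈ R` keeps it, as `μ(R) ≤ 1`.
-/

open MeasureTheory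
open scoped ENNReal

/-- The `i`-th dyadic interval of depth `d` (0-indexed): `[i/2^d, (i+1)/2^d)`. -/
def dyadic (d : ℕ) (i : Fin (2 ^ d)) : Set ℝ :=
  Set.Ico ((i : ℝ) / 2 ^ d) (((i : ℝ) + 1) / 2 ^ d)

open Set Function
open scoped Finset

namespace Finset

theorem card_le_two_of_forall_not_lt_lt {α : Type*} [LinearOrder α] {s : Finset α}
    (h : ∀ a ∈ s, ∀ b ∈ s, ∀ c ∈ s, a < b → ¬b < c) : #s ≤ 2 := by
  rcases s.eq_empty_or_nonempty with rfl | hs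
  · simp
  refine (card_le_card fun b hb => ?_).trans (card_le_two (a := s.min' hs) (b := s.max' hs))
  rw [mem_insert, mem_singleton]
  by_contra! hne
  exact h _ (s.min'_mem hs) b hb _ (s.max'_mem hs)
    ((s.min'_le b hb).lt_of_ne hne.1.symm) ((s.le_max' b hb).lt_of_ne hne.2)

end Finset

section Dyadic

variable {d : ℕ}

theorem measurableSet_dyadic (i : Fin (2 ^ d)) : MeasurableSet (dyadic d i) :=
  measurableSet_Ico

theorem volume_real_dyadic (i : Fin (2 ^ d)) : volume.real (dyadic d i) = (2 ^ d)⁻¹ := by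
  rw [dyadic, Real.volume_real_Ico, ← sub_div, add_sub_cancel_left, max_eq_left (by positivity),
    one_div]

theorem lt_of_mem_dyadic_of_lt {i j : Fin (2 ^ d)} (hij : i < j) {x y : ℝ}
    (hx : x ∈ dyadic d i) (hy : y ∈ dyadic d j) : x < y := by
  have hij' : (i : ℝ) + 1 ≤ j := by exact_mod_cast hij
  calc x < ((i : ℝ) + 1) / 2 ^ d := hx.2
    _ ≤ j / 2 ^ d := by gcongr
    _ ≤ y := hy.1

theorem pairwise_disjoint_dyadic : Pairwise (Disjoint on dyadic d) :=
  (pairwise_disjoint_on _).2 fun _ _ hij =>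
    Set.disjoint_left.2 fun _ hx hy => (lt_of_mem_dyadic_of_lt hij hx hy).false

theorem iUnion_dyadic : ⋃ i, dyadic d i = Ico 0 1 := by
  have h2 : (0 : ℝ) < 2 ^ d := by positivity
  ext x
  simp only [mem_iUnion, dyadic, mem_Ico]
  constructor
  · rintro ⟨i, hi, hi'⟩
    refine ⟨(by positivity : (0 : ℝ) ≤ i / 2 ^ d).trans hi, hi'.trans_le ?_⟩
    rw [div_le_one h2]
    exact_mod_cast i.isLt
  · rintro ⟨h0, h1⟩
    refine ⟨⟨⌊x * 2 ^ d⌋₊, ?_⟩, ?_, ?_⟩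
    · exact (Nat.floor_lt (by positivity)).2 (by push_cast; nlinarith)
    · rw [div_le_iff₀ h2]
      exact Nat.floor_le (by positivity)
    · rw [lt_div_iff₀ h2]
      exact Nat.lt_floor_add_one _

theorem Set.OrdConnected.dyadic_subset_of_lt_of_lt {V : Set ℝ} (hV : V.OrdConnected)
    {i j k : Fin (2 ^ d)} (hij : i < j) (hjk : j < k)
    (hi : (V ∩ dyadic d i).Nonempty) (hk : (V ∩ dyadic d k).Nonempty) : dyadic d j ⊆ V := by
  obtain ⟨a, haV, ha⟩ := hi
  obtain ⟨b, hbV, hb⟩ := hk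
  exact fun t ht =>
    hV.out haV hbV ⟨(lt_of_mem_dyadic_of_lt hij ha ht).le, (lt_of_mem_dyadic_of_lt hjk ht hb).le⟩

open Classical in
theorem Set.OrdConnected.card_dyadic_cut_le_two {V : Set ℝ} (hV : V.OrdConnected) :
    #{i : Fin (2 ^ d) | (V ∩ dyadic d i).Nonempty ∧ ¬dyadic d i ⊆ V} ≤ 2 :=
  Finset.card_le_two_of_forall_not_lt_lt fun _ hi _ hj _ hk hij hjk =>
    (Finset.mem_filter.1 hj).2.2 <|
      hV.dyadic_subset_of_lt_of_lt hij hjk (Finset.mem_filter.1 hi).2.1 (Finset.mem_filter.1 hk).2.1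

end Dyadic

section DominatedMeasure

variable {ν : Measure ℝ} {d : ℕ}

theorem measureReal_le_of_subset_dyadic (hν : ν ≤ volume.restrict (Icc 0 1)) {T : Set ℝ}
    {i : Fin (2 ^ d)} (hT : T ⊆ dyadic d i) : ν.real T ≤ (2 ^ d)⁻¹ := by
  have hle : ν T ≤ volume (dyadic d i) :=
    (Measure.le_iff'.1 (hν.trans Measure.restrict_le_self) T).trans (measure_mono hT)
  rw [← volume_real_dyadic i]
  exact ENNReal.toReal_mono measure_Ico_lt_top.ne hle

theorem measureReal_eq_sum_dyadic (hν : ν ≤ volume.restrict (Icc 0 1)) {V : Set ℝ}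
    (hV : MeasurableSet V) : ν.real V = ∑ i : Fin (2 ^ d), ν.real (V ∩ dyadic d i) := by
  have : IsFiniteMeasure ν := isFiniteMeasure_of_le _ hν
  have hnull : ν (Ico 0 1)ᶜ = 0 := by
    refine le_zero_iff.1 ((Measure.le_iff'.1 hν _).trans_eq ?_)
    rw [← Measure.restrict_congr_set Ico_ae_eq_Icc, Measure.restrict_apply' measurableSet_Ico,
      compl_inter_self, measure_empty]
  calc ν.real V = ν.real (⋃ i, V ∩ dyadic d i) := by
        rw [← inter_iUnion, iUnion_dyadic, measureReal_def, measureReal_def,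
          measure_inter_conull hnull]
    _ = ∑ i, ν.real (V ∩ dyadic d i) :=
        measureReal_iUnion_fintype
          (fun _ _ hij => (pairwise_disjoint_dyadic hij).mono inter_subset_right inter_subset_right)
          fun i => hV.inter (measurableSet_dyadic i)

theorem abs_measureReal_inter_dyadic_sub_le (hν : ν ≤ volume.restrict (Icc 0 1)) (V : Set ℝ)
    (i : Fin (2 ^ d)) :
    |ν.real (V ∩ dyadic d i) - ν.real (dyadic d i) * (2 ^ d * volume.real (V ∩ dyadic d i))|
      ≤ (2 ^ d)⁻¹ := by
  refine abs_sub_le_of_nonneg_of_le measureReal_nonneg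
    (measureReal_le_of_subset_dyadic hν inter_subset_right) (by positivity) ?_
  calc ν.real (dyadic d i) * (2 ^ d * volume.real (V ∩ dyadic d i))
      ≤ (2 ^ d)⁻¹ * (2 ^ d * volume.real (V ∩ dyadic d i)) := by
        gcongr
        exact measureReal_le_of_subset_dyadic hν subset_rfl
    _ = volume.real (V ∩ dyadic d i) := by field_simp
    _ ≤ (2 ^ d)⁻¹ :=
        (measureReal_mono inter_subset_right measure_Ico_lt_top.ne).trans_eq (volume_real_dyadic i)

theorem measureReal_inter_dyadic_sub_eq_zero {V : Set ℝ} {i : Fin (2 ^ d)}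
    (h : V ∩ dyadic d i = ∅ ∨ dyadic d i ⊆ V) :
    ν.real (V ∩ dyadic d i) - ν.real (dyadic d i) * (2 ^ d * volume.real (V ∩ dyadic d i)) = 0 := by
  rcases h with h | h
  · simp [h]
  · rw [inter_eq_right.2 h, volume_real_dyadic, mul_inv_cancel₀ (by positivity), mul_one, sub_self]

theorem abs_measureReal_sub_sum_dyadic_le (hν : ν ≤ volume.restrict (Icc 0 1)) {V : Set ℝ}
    (hV : V.OrdConnected) :
    |ν.real V - ∑ i : Fin (2 ^ d), ν.real (dyadic d i) * (2 ^ d * volume.real (V ∩ dyadic d i))|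
      ≤ 2 / 2 ^ d := by
  classical
  set err : Fin (2 ^ d) → ℝ := fun i =>
    ν.real (V ∩ dyadic d i) - ν.real (dyadic d i) * (2 ^ d * volume.real (V ∩ dyadic d i))
  set S := ({i | (V ∩ dyadic d i).Nonempty ∧ ¬dyadic d i ⊆ V} : Finset (Fin (2 ^ d)))
  have hsum : ν.real V - ∑ i, ν.real (dyadic d i) * (2 ^ d * volume.real (V ∩ dyadic d i)) =
      ∑ i ∈ S, err i := by
    rw [measureReal_eq_sum_dyadic hν hV.measurableSet, ← Finset.sum_sub_distrib]
    refine (Finset.sum_subset (Finset.subset_univ S) fun i _ hi => ?_).symm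
    refine measureReal_inter_dyadic_sub_eq_zero ?_
    simpa [S, ← Set.not_nonempty_iff_eq_empty, imp_iff_not_or] using hi
  calc |ν.real V - ∑ i, ν.real (dyadic d i) * (2 ^ d * volume.real (V ∩ dyadic d i))|
      ≤ ∑ i ∈ S, |err i| := hsum ▸ Finset.abs_sum_le_sum_abs _ _
    _ ≤ #S • (2 ^ d : ℝ)⁻¹ := Finset.sum_le_card_nsmul _ _ _ fun i _ =>
        abs_measureReal_inter_dyadic_sub_le hν V i
    _ ≤ 2 * (2 ^ d)⁻¹ := by
        rw [nsmul_eq_mul]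
        gcongr
        exact_mod_cast hV.card_dyadic_cut_le_two
    _ = 2 / 2 ^ d := (div_eq_mul_inv _ _).symm

end DominatedMeasure

section Bind

variable {α β : Type*} [MeasurableSpace α] [MeasurableSpace β] {m : Measure α}
  {κ : α → Measure β}

theorem integrable_measureReal_of_bind_ne_top (hκ : Measurable κ) {s : Set β}
    (hs : MeasurableSet s) (h : m.bind κ s ≠ ∞) : Integrable (fun a => (κ a).real s) m :=
  integrable_toReal_of_lintegral_ne_top ((Measure.measurable_coe hs).comp hκ).aemeasurable
    (by rwa [← Measure.bind_apply hs hκ.aemeasurable])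

theorem integral_measureReal_eq_bind (hκ : Measurable κ) {s : Set β} (hs : MeasurableSet s)
    (h : m.bind κ s ≠ ∞) : ∫ a, (κ a).real s ∂m = (m.bind κ).real s := by
  rw [Measure.bind_apply hs hκ.aemeasurable] at h
  rw [measureReal_def, Measure.bind_apply hs hκ.aemeasurable]
  exact integral_toReal ((Measure.measurable_coe hs).comp hκ).aemeasurable
    (ae_lt_top ((Measure.measurable_coe hs).comp hκ) h)

theorem integral_measureReal_sub_sum_eq_bind [IsFiniteMeasure (m.bind κ)] (hκ : Measurable κ)
    {ι : Type*} [Fintype ι] {s : Set β} {u : ι → Set β} (hs : MeasurableSet s)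
    (hu : ∀ i, MeasurableSet (u i)) (c : ι → ℝ) :
    ∫ a, ((κ a).real s - ∑ i, (κ a).real (u i) * c i) ∂m =
      (m.bind κ).real s - ∑ i, (m.bind κ).real (u i) * c i := by
  have hint : ∀ t, MeasurableSet t → Integrable (fun a => (κ a).real t) m := fun t ht =>
    integrable_measureReal_of_bind_ne_top hκ ht (measure_ne_top _ _)
  rw [integral_sub (hint s hs) (integrable_finsetSum _ fun i _ => (hint _ (hu i)).mul_const _),
    integral_finsetSum _ fun i _ => (hint _ (hu i)).mul_const _,
    integral_measureReal_eq_bind hκ hs (measure_ne_top _ _)]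
  simp_rw [integral_mul_const, integral_measureReal_eq_bind hκ (hu _) (measure_ne_top _ _)]

theorem bind_restrict_le (hκ : Measurable κ) {ρ : Measure β}
    (h : ∀ T, MeasurableSet T → ∫⁻ a, κ a T ∂m = ρ T) (C : Set α) :
    (m.restrict C).bind κ ≤ ρ :=
  Measure.le_iff.2 fun T hT => by
    rw [Measure.bind_apply hT hκ.aemeasurable, ← h T hT]
    exact setLIntegral_le_lintegral _ _

end Bind

theorem step_approximation_latinon_cutnorm_general {Ω : Type*} [MeasurableSpace Ω]
    (μ : Measure Ω) [IsProbabilityMeasure μ]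
    (W : Ω → Ω → Measure ℝ)
    (hmeas : Measurable (Function.uncurry W))
    (hrow : ∀ᵐ x ∂μ, ∀ T : Set ℝ, MeasurableSet T →
      ∫⁻ y, W x y T ∂μ = volume (T ∩ Set.Icc 0 1))
    (d : ℕ) :
    ∀ R C : Set Ω, MeasurableSet R → MeasurableSet C →
      ∀ V : Set ℝ, V.OrdConnected → V ⊆ Set.Icc 0 1 → MeasurableSet V →
        |∫ x in R, ∫ y in C,
            ((W x y V).toReal -
              ∑ i : Fin (2 ^ d),
                (W x y (dyadic d i)).toReal * 2 ^ d * (volume (V ∩ dyadic d i)).toReal)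
          ∂μ ∂μ| ≤ 2 / 2 ^ d := by
  intro R C _ _ V hV _ _
  simp_rw [mul_assoc, ← measureReal_def, ← Real.norm_eq_abs]
  refine (norm_setIntegral_le_of_norm_le_const_ae' (measure_lt_top μ R) ?_).trans
    (mul_le_of_le_one_right (by positivity) measureReal_le_one)
  filter_upwards [hrow] with x hx _
  have hWx : Measurable (W x) := hmeas.of_uncurry_left
  have hν : (μ.restrict C).bind (W x) ≤ volume.restrict (Icc 0 1) :=
    bind_restrict_le hWx (fun T hT => (hx T hT).trans (Measure.restrict_apply hT).symm) C
  have := isFiniteMeasure_of_le _ hν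
  rw [integral_measureReal_sub_sum_eq_bind hWx hV.measurableSet measurableSet_dyadic,
    Real.norm_eq_abs]
  exact abs_measureReal_sub_sum_dyadic_le hν hV

/-- if `W` is a distribution-valued bigraphon with uniform marginals and
`W^d` is its dyadic step approximation of depth `d` (on each dyadic interval `I` it
redistributes the mass `W(x,y)(I)` uniformly), then the Latinon cut norm of `W − W^d`
is at most `2^{1−d}`: for all measurable `R, C ⊆ Ω` and all intervals `V ⊆ [0,1]`,
`|∫_R ∫_C (W(x,y)(V) − W^d(x,y)(V))| ≤ 2/2^d`. -/
theorem step_approximation_latinon_cutnorm {Ω : Type*} [MeasurableSpace Ω]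
    (μ : Measure Ω) [IsProbabilityMeasure μ]
    (W : Ω → Ω → Measure ℝ)
    (hmeas : Measurable (Function.uncurry W))
    (hprob : ∀ x y, IsProbabilityMeasure (W x y))
    (hsupp : ∀ x y, W x y (Set.Icc (0:ℝ) 1)ᶜ = 0)
    (hrow : ∀ᵐ x ∂μ, ∀ T : Set ℝ, MeasurableSet T →
      ∫⁻ y, W x y T ∂μ = volume (T ∩ Set.Icc 0 1))
    (hcol : ∀ᵐ y ∂μ, ∀ T : Set ℝ, MeasurableSet T →
      ∫⁻ x, W x y T ∂μ = volume (T ∩ Set.Icc 0 1))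
    (d : ℕ) :
    ∀ R C : Set Ω, MeasurableSet R → MeasurableSet C →
      ∀ V : Set ℝ, V.OrdConnected → V ⊆ Set.Icc 0 1 → MeasurableSet V →
        |∫ x in R, ∫ y in C,
            ((W x y V).toReal -
              ∑ i : Fin (2 ^ d),
                (W x y (dyadic d i)).toReal * 2 ^ d * (volume (V ∩ dyadic d i)).toReal)
          ∂μ ∂μ| ≤ 2 / 2 ^ d :=
  step_approximation_latinon_cutnorm_general μ W hmeas hrow d
end

section
/- Let A ∈ 𝓡(k,k) be a k×k pattern and let A* ∈ [0,1]^{k×k} be a realisation of A (i.e., A* is structurally equivalent to A). If the multiset of entries of A* is ε-spread, then the associated step semilatinons satisfy ‖W^A − W^{A*}‖_⊠ ≤ 4ε + 4/k², where W^A is the step function on [0,1]² constant equal to the Dirac measure at A_{i,j}/k² on the (i,j)-th cell of the k×k grid, and W^{A*} is defined analogously with values δ_{A*_{i,j}}. -/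
open MeasureTheory
open scoped Classical

/-- Structural equivalence of two real matrices. -/
def StructEquiv {k ℓ : ℕ} (A B : Fin k → Fin ℓ → ℝ) : Prop :=
  ∀ i i' : Fin k, ∀ j j' : Fin ℓ, (A i j ≤ A i' j' ↔ B i j ≤ B i' j')

/-- The index of the cell of the uniform `k`-partition of `[0,1]` containing `t`. -/
noncomputable def cellIndex (k : ℕ) (hk : 0 < k) (t : ℝ) : Fin k :=
  ⟨min (k - 1) (⌈(k : ℝ) * t⌉₊ - 1), lt_of_le_of_lt (min_le_left _ _) (Nat.sub_lt hk Nat.one_pos)⟩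

/-- The multiset of entries of `B : [0,1]^{k×k}` is `ε`-spread: for every interval
`I ⊆ [0,1]`, the number of entries lying in `I` is `(λ(I) ± ε)·k²`. -/
def IsSpread {k : ℕ} (ε : ℝ) (B : Fin k → Fin k → ℝ) : Prop :=
  ∀ I : Set ℝ, I.OrdConnected → I ⊆ Set.Icc 0 1 → MeasurableSet I →
    |(((Finset.univ : Finset (Fin k × Fin k)).filter (fun p => B p.1 p.2 ∈ I)).card : ℝ)
        - (volume I).toReal * k ^ 2| ≤ ε * k ^ 2

lemma measurable_cellIndex (k : ℕ) (hk : 0 < k) : Measurable (cellIndex k hk) := by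
  have h1 : Measurable (fun t : ℝ => ⌈(k : ℝ) * t⌉₊) :=
    Nat.measurable_ceil.comp (measurable_const.mul measurable_id)
  have h2 : Measurable (fun n : ℕ =>
      (⟨min (k - 1) (n - 1), lt_of_le_of_lt (min_le_left _ _) (Nat.sub_lt hk Nat.one_pos)⟩ : Fin k)) :=
    measurable_from_nat
  exact h2.comp h1

lemma cellIndex_eq {k : ℕ} (hk : 0 < k) (i : Fin k) {t : ℝ}
    (ht : t ∈ Set.Ioc ((i : ℝ) / k) (((i : ℝ) + 1) / k)) : cellIndex k hk t = i := by
  have hkR : (0:ℝ) < k := Nat.cast_pos.mpr hk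
  have hceil : ⌈(k : ℝ) * t⌉₊ = (i : ℕ) + 1 := by
    rw [Nat.ceil_eq_iff (Nat.succ_ne_zero _)]
    constructor
    · push_cast
      have := ht.1
      calc (i:ℝ) = k * ((i:ℝ)/k) := by field_simp
      _ < k * t := by exact mul_lt_mul_of_pos_left ht.1 hkR
    · push_cast
      calc (k:ℝ) * t ≤ k * (((i:ℝ)+1)/k) := mul_le_mul_of_nonneg_left ht.2 hkR.le
      _ = (i:ℝ) + 1 := by field_simp
  have hi : (i : ℕ) ≤ k - 1 := Nat.le_sub_one_of_lt i.isLt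
  simp only [cellIndex, hceil]
  exact Fin.ext (by simp [hi])

lemma partition_Ioc {k : ℕ} (hk : 0 < k) :
    Set.Ioc (0:ℝ) 1 = ⋃ i ∈ (Finset.univ : Finset (Fin k)), Set.Ioc ((i:ℝ)/k) (((i:ℝ)+1)/k) := by
  have hkR : (0:ℝ) < k := Nat.cast_pos.mpr hk
  ext t
  simp only [Set.mem_iUnion, Finset.mem_univ, exists_prop, true_and, Set.mem_Ioc]
  constructor
  · rintro ⟨ht0, ht1⟩
    have hkt : (0:ℝ) < (k:ℝ) * t := mul_pos hkR ht0
    have hc1 : 1 ≤ ⌈(k:ℝ)*t⌉₊ := Nat.one_le_ceil_iff.mpr hkt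
    have hck : ⌈(k:ℝ)*t⌉₊ ≤ k := by
      apply Nat.ceil_le.mpr
      calc (k:ℝ)*t ≤ k*1 := mul_le_mul_of_nonneg_left ht1 hkR.le
      _ = k := mul_one _
    refine ⟨⟨⌈(k:ℝ)*t⌉₊ - 1, by omega⟩, ?_, ?_⟩
    · simp only [Fin.val_mk]
      rw [div_lt_iff₀ hkR]
      have : ((⌈(k:ℝ)*t⌉₊ - 1 : ℕ) : ℝ) < (k:ℝ)*t := by
        have h2 : ((⌈(k:ℝ)*t⌉₊ : ℕ) : ℝ) < (k:ℝ)*t + 1 := Nat.ceil_lt_add_one hkt.le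
        have : ((⌈(k:ℝ)*t⌉₊ - 1 : ℕ) : ℝ) = (⌈(k:ℝ)*t⌉₊ : ℝ) - 1 := by
          push_cast [Nat.cast_sub hc1]; ring
        linarith
      linarith [this]
    · simp only [Fin.val_mk]
      rw [le_div_iff₀ hkR]
      have h3 : (k:ℝ)*t ≤ ⌈(k:ℝ)*t⌉₊ := Nat.le_ceil _
      have : ((⌈(k:ℝ)*t⌉₊ - 1 : ℕ) : ℝ) + 1 = (⌈(k:ℝ)*t⌉₊ : ℝ) := by
        push_cast [Nat.cast_sub hc1]; ring
      rw [mul_comm]; linarith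
  · rintro ⟨i, h1, h2⟩
    have hi0 : (0:ℝ) ≤ (i:ℝ)/k := div_nonneg (Nat.cast_nonneg _) hkR.le
    have hik : (i:ℝ) + 1 ≤ k := by
      have : (i:ℕ) + 1 ≤ k := i.isLt
      exact_mod_cast this
    constructor
    · linarith
    · calc t ≤ ((i:ℝ)+1)/k := h2
      _ ≤ 1 := by rw [div_le_one hkR]; exact hik

lemma integrableOn_cell {k : ℕ} (hk : 0 < k) (c : Fin k → ℝ) {S : Set ℝ}
    (hS : MeasurableSet S) (hS1 : S ⊆ Set.Icc 0 1) :
    IntegrableOn (fun t => c (cellIndex k hk t)) S := by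
  have hmeas : Measurable (fun t => c (cellIndex k hk t)) := by
    have h1 : Measurable (cellIndex k hk) := measurable_cellIndex k hk
    exact (measurable_from_top (f := c)).comp h1
  have hvol : volume S < ⊤ := lt_of_le_of_lt (measure_mono hS1) (by simp [Real.volume_Icc])
  haveI := Fact.mk hvol
  refine Integrable.mono' (integrable_const (∑ i, |c i|)) hmeas.aestronglyMeasurable ?_
  filter_upwards with t
  simp only [Real.norm_eq_abs]
  exact Finset.single_le_sum (f := fun i => |c i|) (fun i _ => abs_nonneg _) (Finset.mem_univ _)

lemma integral_cell {k : ℕ} (hk : 0 < k) (c : Fin k → ℝ) :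
    ∫ t in Set.Icc (0:ℝ) 1, c (cellIndex k hk t) = (∑ i, c i) / k := by
  have hkR : (0:ℝ) < k := Nat.cast_pos.mpr hk
  rw [MeasureTheory.integral_Icc_eq_integral_Ioc, partition_Ioc hk]
  rw [MeasureTheory.integral_biUnion_finset Finset.univ (fun i _ => measurableSet_Ioc)
    ?_ ?_]
  · have : ∀ i : Fin k, ∫ t in Set.Ioc ((i:ℝ)/k) (((i:ℝ)+1)/k), c (cellIndex k hk t) = c i / k := by
      intro i
      rw [setIntegral_congr_fun measurableSet_Ioc (g := fun _ => c i)
        (fun t ht => by rw [cellIndex_eq hk i ht])]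
      rw [setIntegral_const, measureReal_def, Real.volume_Ioc]
      have : ((i:ℝ)+1)/k - (i:ℝ)/k = 1/k := by field_simp; ring
      rw [this, ENNReal.toReal_ofReal (by positivity)]
      rw [smul_eq_mul]; ring
    rw [Finset.sum_congr rfl (fun i _ => this i), Finset.sum_div]
  · intro i _ j _ hij
    have hkR : (0:ℝ) < k := Nat.cast_pos.mpr hk
    apply Set.Ioc_disjoint_Ioc.mpr
    rcases hij.lt_or_gt with h | h
    · have : (i:ℝ) + 1 ≤ (j:ℝ) := by exact_mod_cast h
      calc min (((i:ℝ)+1)/k) (((j:ℝ)+1)/k) ≤ ((i:ℝ)+1)/k := min_le_left _ _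
      _ ≤ (j:ℝ)/k := by apply div_le_div_of_nonneg_right this hkR.le |>.trans_eq rfl
      _ ≤ max ((i:ℝ)/k) ((j:ℝ)/k) := le_max_right _ _
    · have : (j:ℝ) + 1 ≤ (i:ℝ) := by exact_mod_cast h
      calc min (((i:ℝ)+1)/k) (((j:ℝ)+1)/k) ≤ ((j:ℝ)+1)/k := min_le_right _ _
      _ ≤ (i:ℝ)/k := by apply div_le_div_of_nonneg_right this hkR.le |>.trans_eq rfl
      _ ≤ max ((i:ℝ)/k) ((j:ℝ)/k) := le_max_left _ _
  · intro i _
    apply integrableOn_cell hk c measurableSet_Ioc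
    intro t ht
    constructor
    · have : (0:ℝ) ≤ (i:ℝ)/k := div_nonneg (Nat.cast_nonneg _) hkR.le
      linarith [ht.1]
    · have hik : (i:ℝ) + 1 ≤ k := by exact_mod_cast i.isLt
      calc t ≤ ((i:ℝ)+1)/k := ht.2
      _ ≤ 1 := by rw [div_le_one hkR]; exact hik

lemma abs_setIntegral_cell_le {k : ℕ} (hk : 0 < k) (c : Fin k → ℝ) {S : Set ℝ}
    (hS : MeasurableSet S) (hS1 : S ⊆ Set.Icc 0 1) :
    |∫ t in S, c (cellIndex k hk t)| ≤ (∑ i, |c i|) / k := by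
  have habs : |∫ t in S, c (cellIndex k hk t)| ≤ ∫ t in S, |c (cellIndex k hk t)| := by
    simpa [Real.norm_eq_abs] using
      norm_integral_le_integral_norm (μ := volume.restrict S) (fun t => c (cellIndex k hk t))
  have hmono : ∫ t in S, |c (cellIndex k hk t)| ≤ ∫ t in Set.Icc 0 1, |c (cellIndex k hk t)| := by
    apply setIntegral_mono_set
    · exact integrableOn_cell hk (fun i => |c i|) measurableSet_Icc (subset_refl _)
    · exact Filter.Eventually.of_forall fun t => abs_nonneg _
    · exact HasSubset.Subset.eventuallyLE hS1
  have heq : ∫ t in Set.Icc (0:ℝ) 1, |c (cellIndex k hk t)| = (∑ i, |c i|) / k :=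
    integral_cell hk (fun i => |c i|)
  linarith

lemma trichot {V : Set ℝ} (hV : V.OrdConnected) {x : ℝ} (hx : x ∉ V) :
    (∀ v ∈ V, x < v) ∨ (∀ v ∈ V, v < x) := by
  by_contra h
  push_neg at h
  obtain ⟨⟨v1, hv1, hv1x⟩, ⟨v2, hv2, hv2x⟩⟩ := h
  exact hx (hV.out hv1 hv2 ⟨hv1x, hv2x⟩)

lemma count_upper (N : ℕ) (c d : ℝ) (hc : 0 ≤ c) (hcd : c ≤ d) :
    ((Finset.univ.filter (fun n : Fin N => c ≤ (n:ℝ)+1 ∧ (n:ℝ)+1 ≤ d)).card : ℝ) ≤ d - c + 1 := by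
  have hd : 0 ≤ d := hc.trans hcd
  have hsub : (Finset.univ.filter (fun n : Fin N => c ≤ (n:ℝ)+1 ∧ (n:ℝ)+1 ≤ d)).card
      ≤ (Finset.Icc ⌈c⌉₊ ⌊d⌋₊).card := by
    refine Finset.card_le_card_of_injOn (fun n => (n : ℕ) + 1) ?_ ?_
    · intro n hn
      simp only [Finset.mem_coe, Finset.mem_filter, Finset.mem_univ, true_and] at hn
      rw [Finset.mem_coe, Finset.mem_Icc]
      constructor
      · exact Nat.ceil_le.mpr (by exact_mod_cast hn.1)
      · exact Nat.le_floor (by exact_mod_cast hn.2)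
    · intro a _ b _ hab
      have h2 : (a:ℕ)+1 = (b:ℕ)+1 := hab
      exact Fin.ext (by omega)
  have hcard : (Finset.Icc ⌈c⌉₊ ⌊d⌋₊).card = ⌊d⌋₊ + 1 - ⌈c⌉₊ := Nat.card_Icc _ _
  calc ((Finset.univ.filter (fun n : Fin N => c ≤ (n:ℝ)+1 ∧ (n:ℝ)+1 ≤ d)).card : ℝ)
      ≤ ((⌊d⌋₊ + 1 - ⌈c⌉₊ : ℕ) : ℝ) := by exact_mod_cast hcard ▸ hsub
    _ ≤ d - c + 1 := by
        by_cases h : ⌈c⌉₊ ≤ ⌊d⌋₊ + 1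
        · rw [Nat.cast_sub h]
          have h1 : c ≤ (⌈c⌉₊ : ℝ) := Nat.le_ceil _
          have h2 : ((⌊d⌋₊ : ℕ) : ℝ) ≤ d := Nat.floor_le hd
          push_cast
          linarith
        · push_neg at h
          have : ⌊d⌋₊ + 1 - ⌈c⌉₊ = 0 := by omega
          rw [this]
          simp
          linarith

lemma count_lower (N : ℕ) (c d : ℝ) (hc : 0 ≤ c) (hdN : d ≤ N) :
    d - c - 1 ≤ ((Finset.univ.filter (fun n : Fin N => c < (n:ℝ)+1 ∧ (n:ℝ)+1 < d)).card : ℝ) := by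
  by_cases htriv : d - c - 1 ≤ 0
  · exact htriv.trans (Nat.cast_nonneg _)
  push_neg at htriv
  have hd1 : 1 < d := by linarith
  have hd0 : 0 ≤ d := by linarith
  have hceil1 : 1 ≤ ⌈d⌉₊ := Nat.one_le_ceil_iff.mpr (by linarith)
  have hsub : (Finset.Icc (⌊c⌋₊ + 1) (⌈d⌉₊ - 1)).card
      ≤ (Finset.univ.filter (fun n : Fin N => c < (n:ℝ)+1 ∧ (n:ℝ)+1 < d)).card := by
    have hmlt : ∀ m ∈ Finset.Icc (⌊c⌋₊ + 1) (⌈d⌉₊ - 1), m - 1 < N := by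
      intro m hm
      rw [Finset.mem_Icc] at hm
      have hcN : ⌈d⌉₊ ≤ N := Nat.ceil_le.mpr hdN
      omega
    refine Finset.card_le_card_of_injOn (fun m => if h : m - 1 < N then (⟨m - 1, h⟩ : Fin N) else ⟨0, by
      rcases N with _ | n
      · exfalso; have : d ≤ 0 := by exact_mod_cast hdN
        linarith
      · omega⟩) ?_ ?_
    · intro m hm
      show (if h : m - 1 < N then (⟨m-1,h⟩ : Fin N) else _) ∈ _
      rw [dif_pos (hmlt m hm)]
      rw [Finset.mem_coe, Finset.mem_Icc] at hm
      simp only [Finset.mem_coe, Finset.mem_filter, Finset.mem_univ, true_and, Fin.val_mk]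
      have hm1 : 1 ≤ m := by omega
      have hcast : ((m - 1 : ℕ) : ℝ) + 1 = (m : ℝ) := by
        have : ((m - 1 : ℕ) : ℝ) = (m : ℝ) - 1 := by push_cast [Nat.cast_sub hm1]; ring
        linarith [this]
      rw [hcast]
      constructor
      · have : c < (⌊c⌋₊ : ℝ) + 1 := Nat.lt_floor_add_one c
        have h2 : ((⌊c⌋₊ + 1 : ℕ) : ℝ) ≤ (m : ℝ) := by exact_mod_cast hm.1
        push_cast at h2
        linarith
      · have h3 : (m : ℝ) ≤ ((⌈d⌉₊ - 1 : ℕ) : ℝ) := by exact_mod_cast hm.2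
        have h4 : ((⌈d⌉₊ - 1 : ℕ) : ℝ) = (⌈d⌉₊ : ℝ) - 1 := by push_cast [Nat.cast_sub hceil1]; ring
        have h5 : (⌈d⌉₊ : ℝ) < d + 1 := Nat.ceil_lt_add_one hd0
        linarith
    · intro a ha b hb hab
      simp only [Finset.coe_Icc, Set.mem_Icc] at ha hb
      have hab' : (if h : a - 1 < N then (⟨a-1,h⟩ : Fin N) else _) = (if h : b - 1 < N then (⟨b-1,h⟩ : Fin N) else _) := hab
      rw [dif_pos (hmlt _ (Finset.mem_Icc.mpr ha)), dif_pos (hmlt _ (Finset.mem_Icc.mpr hb))] at hab'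
      simp only [Fin.mk.injEq] at hab'
      omega
  have hcard : (Finset.Icc (⌊c⌋₊ + 1) (⌈d⌉₊ - 1)).card = ⌈d⌉₊ - 1 + 1 - (⌊c⌋₊ + 1) := Nat.card_Icc _ _
  have key : d - c - 1 ≤ ((⌈d⌉₊ - 1 + 1 - (⌊c⌋₊ + 1) : ℕ) : ℝ) := by
    by_cases h : ⌊c⌋₊ + 1 ≤ ⌈d⌉₊ - 1 + 1
    · rw [Nat.cast_sub h]
      have h1 : d ≤ (⌈d⌉₊ : ℝ) := Nat.le_ceil _
      have h2 : ((⌊c⌋₊ : ℕ) : ℝ) ≤ c := Nat.floor_le hc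
      have h3 : ((⌈d⌉₊ - 1 + 1 : ℕ) : ℝ) = (⌈d⌉₊ : ℝ) := by congr 1; omega
      rw [h3]
      push_cast
      linarith
    · exfalso
      have : ⌈d⌉₊ ≤ ⌊c⌋₊ := by omega
      have h1 : d ≤ (⌈d⌉₊ : ℝ) := Nat.le_ceil _
      have h2 : ((⌊c⌋₊ : ℕ) : ℝ) ≤ c := Nat.floor_le hc
      have h4 : ((⌈d⌉₊:ℕ) : ℝ) ≤ ((⌊c⌋₊:ℕ) : ℝ) := by exact_mod_cast this
      linarith
  calc d - c - 1 ≤ ((Finset.Icc (⌊c⌋₊ + 1) (⌈d⌉₊ - 1)).card : ℝ) := by rw [hcard]; exact key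
    _ ≤ _ := by exact_mod_cast hsub

lemma count_interval (N : ℕ) (hN : 0 < N) (J : Set ℝ) (hJ : J.OrdConnected)
    (hJ1 : J ⊆ Set.Icc 0 1) :
    |((Finset.univ.filter (fun n : Fin N => ((n:ℝ)+1)/N ∈ J)).card : ℝ)
      - (volume J).toReal * N| ≤ 1 := by
  have hNR : (0:ℝ) < N := Nat.cast_pos.mpr hN
  rcases Set.eq_empty_or_nonempty J with rfl | hne
  · simp
  set a := sInf J with ha_def
  set b := sSup J with hb_def
  have hbdd : BddAbove J := ⟨1, fun x hx => (hJ1 hx).2⟩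
  have hbddb : BddBelow J := ⟨0, fun x hx => (hJ1 hx).1⟩
  have ha0 : 0 ≤ a := le_csInf hne (fun x hx => (hJ1 hx).1)
  have hb1 : b ≤ 1 := csSup_le hne (fun x hx => (hJ1 hx).2)
  have hab : a ≤ b := csInf_le_csSup hne hbddb hbdd
  have hsub : J ⊆ Set.Icc a b := fun x hx => ⟨csInf_le hbddb hx, le_csSup hbdd hx⟩
  have hsup : Set.Ioo a b ⊆ J := by
    intro x hx
    obtain ⟨y, hy, hyx⟩ := exists_lt_of_csInf_lt hne hx.1
    obtain ⟨z, hz, hxz⟩ := exists_lt_of_lt_csSup hne hx.2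
    exact hJ.out hy hz ⟨hyx.le, hxz.le⟩
  have hvol : (volume J).toReal = b - a := by
    have h1 : volume J ≤ volume (Set.Icc a b) := measure_mono hsub
    have h2 : volume (Set.Ioo a b) ≤ volume J := measure_mono hsup
    rw [Real.volume_Icc] at h1
    rw [Real.volume_Ioo] at h2
    have : volume J = ENNReal.ofReal (b - a) := le_antisymm h1 h2
    rw [this, ENNReal.toReal_ofReal (by linarith)]
  rw [hvol]
  have hup : ((Finset.univ.filter (fun n : Fin N => ((n:ℝ)+1)/N ∈ J)).card : ℝ)
      ≤ (b - a) * N + 1 := by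
    have hsubf : (Finset.univ.filter (fun n : Fin N => ((n:ℝ)+1)/N ∈ J))
        ⊆ (Finset.univ.filter (fun n : Fin N => N*a ≤ (n:ℝ)+1 ∧ (n:ℝ)+1 ≤ N*b)) := by
      intro n hn
      simp only [Finset.mem_filter, Finset.mem_univ, true_and] at hn ⊢
      have := hsub hn
      constructor
      · rw [mul_comm]
        exact (le_div_iff₀ hNR).mp this.1
      · rw [mul_comm]
        exact (div_le_iff₀ hNR).mp this.2
    calc ((Finset.univ.filter (fun n : Fin N => ((n:ℝ)+1)/N ∈ J)).card : ℝ)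
        ≤ ((Finset.univ.filter (fun n : Fin N => N*a ≤ (n:ℝ)+1 ∧ (n:ℝ)+1 ≤ N*b)).card : ℝ) := by
          exact_mod_cast Finset.card_le_card hsubf
      _ ≤ N*b - N*a + 1 := count_upper N (N*a) (N*b)
          (mul_nonneg hNR.le ha0) (mul_le_mul_of_nonneg_left hab hNR.le)
      _ = (b - a) * N + 1 := by ring
  have hlo : (b - a) * N - 1 ≤ ((Finset.univ.filter (fun n : Fin N => ((n:ℝ)+1)/N ∈ J)).card : ℝ) := by
    have hsubf : (Finset.univ.filter (fun n : Fin N => N*a < (n:ℝ)+1 ∧ (n:ℝ)+1 < N*b))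
        ⊆ (Finset.univ.filter (fun n : Fin N => ((n:ℝ)+1)/N ∈ J)) := by
      intro n hn
      simp only [Finset.mem_filter, Finset.mem_univ, true_and] at hn ⊢
      apply hsup
      constructor
      · rw [lt_div_iff₀ hNR, mul_comm]
        exact hn.1
      · rw [div_lt_iff₀ hNR, mul_comm]
        exact hn.2
    calc (b - a) * N - 1 = N*b - N*a - 1 := by ring
      _ ≤ ((Finset.univ.filter (fun n : Fin N => N*a < (n:ℝ)+1 ∧ (n:ℝ)+1 < N*b)).card : ℝ) :=
          count_lower N (N*a) (N*b) (mul_nonneg hNR.le ha0)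
            (by calc N*b ≤ N*1 := mul_le_mul_of_nonneg_left hb1 hNR.le
                _ = N := mul_one _)
      _ ≤ _ := by exact_mod_cast Finset.card_le_card hsubf
  rw [abs_le]
  constructor <;> linarith

/-- if `A ∈ 𝓡(k,k)` is a pattern and `A*` is a realisation of `A` whose
multiset of entries is `ε`-spread, then the associated step semilatinons `W^A` (with
Dirac values `δ_{(A_{ij}+1)/k²}`) and `W^{A*}` (with Dirac values `δ_{A*_{ij}}`) satisfy
`‖W^A − W^{A*}‖_⊠ ≤ 4ε + 4/k²`. -/
theorem spread_realisation_close {k : ℕ} (hk : 0 < k)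
    (A : Fin k → Fin k → Fin (k * k))
    (hA : Function.Injective fun p : Fin k × Fin k => A p.1 p.2)
    (Astar : Fin k → Fin k → ℝ)
    (hrange : ∀ i j, Astar i j ∈ Set.Icc (0:ℝ) 1)
    (hreal : StructEquiv Astar (fun i j => ((A i j : ℕ) : ℝ)))
    (ε : ℝ) (hε : 0 < ε) (hspread : IsSpread ε Astar) :
    ∀ R C : Set ℝ, MeasurableSet R → MeasurableSet C →
      R ⊆ Set.Icc 0 1 → C ⊆ Set.Icc 0 1 →
      ∀ V : Set ℝ, V.OrdConnected → V ⊆ Set.Icc 0 1 → MeasurableSet V →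
        |∫ x in R, ∫ y in C,
            ((if (((A (cellIndex k hk x) (cellIndex k hk y) : ℕ) : ℝ) + 1) / k ^ 2 ∈ V
                then (1:ℝ) else 0)
              - (if Astar (cellIndex k hk x) (cellIndex k hk y) ∈ V then (1:ℝ) else 0))| ≤
          4 * ε + 4 / k ^ 2 := by
  intro R C hR hC hR1 hC1 V hV hV1 hVmeas
  have hkR : (0:ℝ) < k := Nat.cast_pos.mpr hk
  have hk2 : (0:ℝ) < (k:ℝ)^2 := by positivity
  set F : Fin k → Fin k → ℝ := fun i j =>
    (if (((A i j : ℕ) : ℝ) + 1) / (k:ℝ) ^ 2 ∈ V then (1:ℝ) else 0)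
      - (if Astar i j ∈ V then (1:ℝ) else 0) with hF
  set H : Fin k → ℝ := fun i => ∫ y in C, F i (cellIndex k hk y) with hH
  have hred : |∫ x in R, ∫ y in C,
      ((if (((A (cellIndex k hk x) (cellIndex k hk y) : ℕ) : ℝ) + 1) / (k:ℝ) ^ 2 ∈ V
          then (1:ℝ) else 0)
        - (if Astar (cellIndex k hk x) (cellIndex k hk y) ∈ V then (1:ℝ) else 0))|
      ≤ (∑ p : Fin k × Fin k, |F p.1 p.2|) / (k:ℝ)^2 := by
    have h1 : |∫ x in R, H (cellIndex k hk x)| ≤ (∑ i, |H i|) / k :=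
      abs_setIntegral_cell_le hk H hR hR1
    have h2 : ∀ i, |H i| ≤ (∑ j, |F i j|) / k := fun i =>
      abs_setIntegral_cell_le hk (F i) hC hC1
    have h3 : (∑ i, |H i|) ≤ (∑ p : Fin k × Fin k, |F p.1 p.2|) / k := by
      rw [Fintype.sum_prod_type, Finset.sum_div]
      exact Finset.sum_le_sum fun i _ => by
        simpa [Finset.sum_div] using h2 i
    calc |∫ x in R, ∫ y in C,
        ((if (((A (cellIndex k hk x) (cellIndex k hk y) : ℕ) : ℝ) + 1) / (k:ℝ) ^ 2 ∈ V
            then (1:ℝ) else 0)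
          - (if Astar (cellIndex k hk x) (cellIndex k hk y) ∈ V then (1:ℝ) else 0))|
        = |∫ x in R, H (cellIndex k hk x)| := rfl
      _ ≤ (∑ i, |H i|) / k := h1
      _ ≤ ((∑ p : Fin k × Fin k, |F p.1 p.2|) / k) / k := by
          apply div_le_div_of_nonneg_right h3 hkR.le
      _ = (∑ p : Fin k × Fin k, |F p.1 p.2|) / (k:ℝ)^2 := by
          rw [div_div, sq]
  have hcomb : (∑ p : Fin k × Fin k,
      |(if (((A p.1 p.2 : ℕ) : ℝ) + 1) / (k:ℝ) ^ 2 ∈ V then (1:ℝ) else 0)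
        - (if Astar p.1 p.2 ∈ V then (1:ℝ) else 0)|) ≤ 2 * ε * (k:ℝ)^2 + 2 := by
    have hkR : (0:ℝ) < k := Nat.cast_pos.mpr hk
    have hk2 : (0:ℝ) < (k:ℝ)^2 := by positivity
    have hval : ∀ p : Fin k × Fin k, (((A p.1 p.2 : ℕ) : ℝ) + 1) / (k:ℝ)^2 ∈ Set.Icc (0:ℝ) 1 := by
      intro p
      have h1 : ((A p.1 p.2 : ℕ) : ℝ) + 1 ≤ (k:ℝ)^2 := by
        have : ((A p.1 p.2 : ℕ) : ℝ) + 1 ≤ ((k*k:ℕ):ℝ) := by exact_mod_cast (A p.1 p.2).isLt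
        calc ((A p.1 p.2 : ℕ) : ℝ) + 1 ≤ ((k*k:ℕ):ℝ) := this
          _ = (k:ℝ)^2 := by push_cast; ring
      constructor
      · positivity
      · rw [div_le_one hk2]; exact h1
    rcases Set.eq_empty_or_nonempty V with rfl | hVne
    · simp only [Set.mem_empty_iff_false, if_false, sub_zero, abs_zero, Finset.sum_const_zero]
      positivity
    -- below/above interval sets
    set Ib : Set ℝ := {x | x ∈ Set.Icc (0:ℝ) 1 ∧ ∀ v ∈ V, x < v} with hIb
    set Ia : Set ℝ := {x | x ∈ Set.Icc (0:ℝ) 1 ∧ ∀ v ∈ V, v < x} with hIa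
    have hIbOrd : Ib.OrdConnected := by
      constructor
      intro x hx y hy z hz
      exact ⟨⟨hx.1.1.trans hz.1, hz.2.trans hy.1.2⟩,
        fun v hv => lt_of_le_of_lt hz.2 (hy.2 v hv)⟩
    have hIaOrd : Ia.OrdConnected := by
      constructor
      intro x hx y hy z hz
      exact ⟨⟨hx.1.1.trans hz.1, hz.2.trans hy.1.2⟩,
        fun v hv => lt_of_lt_of_le (hx.2 v hv) hz.1⟩
    have hIbsub : Ib ⊆ Set.Icc 0 1 := fun x hx => hx.1
    have hIasub : Ia ⊆ Set.Icc 0 1 := fun x hx => hx.1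
    -- finsets
    set B1 := @Finset.filter _
      (fun p : Fin k × Fin k => (((A p.1 p.2 : ℕ) : ℝ) + 1) / (k:ℝ)^2 ∈ Ib)
      (fun p => Classical.propDecidable _) Finset.univ with hB1d
    set B2 := @Finset.filter _ (fun p : Fin k × Fin k => Astar p.1 p.2 ∈ Ib)
      (fun p => Classical.propDecidable _) Finset.univ with hB2d
    set A1 := @Finset.filter _
      (fun p : Fin k × Fin k => (((A p.1 p.2 : ℕ) : ℝ) + 1) / (k:ℝ)^2 ∈ Ia)
      (fun p => Classical.propDecidable _) Finset.univ with hA1d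
    set A2 := @Finset.filter _ (fun p : Fin k × Fin k => Astar p.1 p.2 ∈ Ia)
      (fun p => Classical.propDecidable _) Finset.univ with hA2d
    set S1 := Finset.univ.filter
      (fun p : Fin k × Fin k => (((A p.1 p.2 : ℕ) : ℝ) + 1) / (k:ℝ)^2 ∈ V) with hS1d
    set S2 := Finset.univ.filter (fun p : Fin k × Fin k => Astar p.1 p.2 ∈ V) with hS2d
    -- membership characterisations
    have hmemB1 : ∀ p : Fin k × Fin k,
        p ∈ B1 ↔ ∀ v ∈ V, (((A p.1 p.2 : ℕ) : ℝ) + 1) / (k:ℝ)^2 < v := by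
      intro p
      simp only [hB1d, Finset.mem_filter, Finset.mem_univ, true_and, hIb, Set.mem_setOf_eq]
      exact ⟨fun h => h.2, fun h => ⟨hval p, h⟩⟩
    have hmemB2 : ∀ p : Fin k × Fin k, p ∈ B2 ↔ ∀ v ∈ V, Astar p.1 p.2 < v := by
      intro p
      simp only [hB2d, Finset.mem_filter, Finset.mem_univ, true_and, hIb, Set.mem_setOf_eq]
      exact ⟨fun h => h.2, fun h => ⟨hrange p.1 p.2, h⟩⟩
    have hmemA1 : ∀ p : Fin k × Fin k,
        p ∈ A1 ↔ ∀ v ∈ V, v < (((A p.1 p.2 : ℕ) : ℝ) + 1) / (k:ℝ)^2 := by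
      intro p
      simp only [hA1d, Finset.mem_filter, Finset.mem_univ, true_and, hIa, Set.mem_setOf_eq]
      exact ⟨fun h => h.2, fun h => ⟨hval p, h⟩⟩
    have hmemA2 : ∀ p : Fin k × Fin k, p ∈ A2 ↔ ∀ v ∈ V, v < Astar p.1 p.2 := by
      intro p
      simp only [hA2d, Finset.mem_filter, Finset.mem_univ, true_and, hIa, Set.mem_setOf_eq]
      exact ⟨fun h => h.2, fun h => ⟨hrange p.1 p.2, h⟩⟩
    have hmemS1 : ∀ p : Fin k × Fin k,
        p ∈ S1 ↔ (((A p.1 p.2 : ℕ) : ℝ) + 1) / (k:ℝ)^2 ∈ V := by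
      intro p; simp only [hS1d, Finset.mem_filter, Finset.mem_univ, true_and]
    have hmemS2 : ∀ p : Fin k × Fin k, p ∈ S2 ↔ Astar p.1 p.2 ∈ V := by
      intro p; simp only [hS2d, Finset.mem_filter, Finset.mem_univ, true_and]
    -- order transfer
    have hord : ∀ p q : Fin k × Fin k, Astar p.1 p.2 < Astar q.1 q.2 →
        (((A p.1 p.2 : ℕ) : ℝ) + 1) / (k:ℝ)^2 < (((A q.1 q.2 : ℕ) : ℝ) + 1) / (k:ℝ)^2 := by
      intro p q h
      have h2 : ((A p.1 p.2 : ℕ) : ℝ) < ((A q.1 q.2 : ℕ) : ℝ) := by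
        by_contra hcon
        push_neg at hcon
        exact absurd ((hreal q.1 p.1 q.2 p.2).mpr hcon) (not_le.mpr h)
      apply div_lt_div_of_pos_right ?_ hk2
      linarith
    -- spread hypothesis applied
    have hsB : |((B2.card : ℕ) : ℝ) - (volume Ib).toReal * (k:ℝ)^2| ≤ ε * (k:ℝ)^2 :=
      hspread Ib hIbOrd hIbsub hIbOrd.measurableSet
    have hsA : |((A2.card : ℕ) : ℝ) - (volume Ia).toReal * (k:ℝ)^2| ≤ ε * (k:ℝ)^2 :=
      hspread Ia hIaOrd hIasub hIaOrd.measurableSet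
    -- counting applied
    have hAbij : Function.Bijective (fun p : Fin k × Fin k => A p.1 p.2) :=
      (Fintype.bijective_iff_injective_and_card _).mpr ⟨hA, by simp⟩
    have hcount : ∀ (J : Set ℝ), J.OrdConnected → J ⊆ Set.Icc 0 1 →
        |((Finset.univ.filter
            (fun p : Fin k × Fin k => (((A p.1 p.2 : ℕ) : ℝ) + 1) / (k:ℝ)^2 ∈ J)).card : ℝ)
          - (volume J).toReal * (k:ℝ)^2| ≤ 1 := by
      intro J hJ hJ1
      have h := count_interval (k*k) (Nat.mul_pos hk hk) J hJ hJ1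
      have hkk : ((k*k : ℕ) : ℝ) = (k:ℝ)^2 := by push_cast; ring
      rw [hkk] at h
      have hcards : (Finset.univ.filter
          (fun p : Fin k × Fin k => (((A p.1 p.2 : ℕ) : ℝ) + 1) / (k:ℝ)^2 ∈ J)).card
          = (Finset.univ.filter (fun n : Fin (k*k) => ((n:ℝ)+1)/(k:ℝ)^2 ∈ J)).card := by
        apply Finset.card_bij (fun p _ => A p.1 p.2)
        · intro p hp
          simp only [Finset.mem_filter, Finset.mem_univ, true_and] at hp ⊢
          exact hp
        · intro p1 h1 p2 h2 heq
          exact hA heq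
        · intro n hn
          obtain ⟨p, hp⟩ := hAbij.2 n
          refine ⟨p, ?_, hp⟩
          simp only [Finset.mem_filter, Finset.mem_univ, true_and] at hn ⊢
          rw [show A p.1 p.2 = n from hp]
          exact hn
      rw [hcards]
      exact h
    have hcB : |((B1.card : ℕ) : ℝ) - (volume Ib).toReal * (k:ℝ)^2| ≤ 1 :=
      hcount Ib hIbOrd hIbsub
    have hcA : |((A1.card : ℕ) : ℝ) - (volume Ia).toReal * (k:ℝ)^2| ≤ 1 :=
      hcount Ia hIaOrd hIasub
    -- nestedness
    have hnestB : B1 ⊆ B2 ∨ B2 ⊆ B1 := by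
      by_cases h : B1 ⊆ B2
      · exact Or.inl h
      · right
        obtain ⟨p, hp1, hp2⟩ := Finset.not_subset.mp h
        intro q hq
        rw [hmemB1 p] at hp1
        rw [hmemB2 p] at hp2
        rw [hmemB2 q] at hq
        rw [hmemB1 q]
        push_neg at hp2
        obtain ⟨v₁, hv₁, hv₁p⟩ := hp2
        have hlt : Astar q.1 q.2 < Astar p.1 p.2 := lt_of_lt_of_le (hq v₁ hv₁) hv₁p
        intro v hv
        exact (hord q p hlt).trans (hp1 v hv)
    have hnestA : A1 ⊆ A2 ∨ A2 ⊆ A1 := by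
      by_cases h : A1 ⊆ A2
      · exact Or.inl h
      · right
        obtain ⟨p, hp1, hp2⟩ := Finset.not_subset.mp h
        intro q hq
        rw [hmemA1 p] at hp1
        rw [hmemA2 p] at hp2
        rw [hmemA2 q] at hq
        rw [hmemA1 q]
        push_neg at hp2
        obtain ⟨v₁, hv₁, hv₁p⟩ := hp2
        have hlt : Astar p.1 p.2 < Astar q.1 q.2 := lt_of_le_of_lt hv₁p (hq v₁ hv₁)
        intro v hv
        exact (hp1 v hv).trans (hord p q hlt)
    -- symmetric-difference card bound from nestedness
    have hdiff : ∀ (s t : Finset (Fin k × Fin k)), s ⊆ t ∨ t ⊆ s →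
        (((s \ t).card : ℝ) + ((t \ s).card : ℝ)) ≤ |(s.card : ℝ) - (t.card : ℝ)| := by
      intro s t h
      rcases h with h | h
      · rw [Finset.sdiff_eq_empty_iff_subset.mpr h]
        simp only [Finset.card_empty, Nat.cast_zero, zero_add]
        rw [Finset.card_sdiff_of_subset h, Nat.cast_sub (Finset.card_le_card h), abs_sub_comm]
        exact le_abs_self _
      · rw [Finset.sdiff_eq_empty_iff_subset.mpr h]
        simp only [Finset.card_empty, Nat.cast_zero, add_zero]
        rw [Finset.card_sdiff_of_subset h, Nat.cast_sub (Finset.card_le_card h)]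
        exact le_abs_self _
    -- inclusions
    have hincl1 : S1 \ S2 ⊆ (B2 \ B1) ∪ (A2 \ A1) := by
      intro p hp
      rw [Finset.mem_sdiff] at hp
      have hc1 := (hmemS1 p).mp hp.1
      have hc2 : Astar p.1 p.2 ∉ V := fun h => hp.2 ((hmemS2 p).mpr h)
      rcases trichot hV hc2 with h | h
      · apply Finset.mem_union_left
        rw [Finset.mem_sdiff, hmemB2 p, hmemB1 p]
        exact ⟨h, fun hcon => lt_irrefl _ (hcon _ hc1)⟩
      · apply Finset.mem_union_right
        rw [Finset.mem_sdiff, hmemA2 p, hmemA1 p]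
        exact ⟨h, fun hcon => lt_irrefl _ (hcon _ hc1)⟩
    have hincl2 : S2 \ S1 ⊆ (B1 \ B2) ∪ (A1 \ A2) := by
      intro p hp
      rw [Finset.mem_sdiff] at hp
      have hc2 := (hmemS2 p).mp hp.1
      have hc1 : (((A p.1 p.2 : ℕ) : ℝ) + 1) / (k:ℝ)^2 ∉ V := fun h => hp.2 ((hmemS1 p).mpr h)
      rcases trichot hV hc1 with h | h
      · apply Finset.mem_union_left
        rw [Finset.mem_sdiff, hmemB1 p, hmemB2 p]
        exact ⟨h, fun hcon => lt_irrefl _ (hcon _ hc2)⟩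
      · apply Finset.mem_union_right
        rw [Finset.mem_sdiff, hmemA1 p, hmemA2 p]
        exact ⟨h, fun hcon => lt_irrefl _ (hcon _ hc2)⟩
    -- pointwise bound and sum
    have hsum : (∑ p : Fin k × Fin k,
        |(if (((A p.1 p.2 : ℕ) : ℝ) + 1) / (k:ℝ) ^ 2 ∈ V then (1:ℝ) else 0)
          - (if Astar p.1 p.2 ∈ V then (1:ℝ) else 0)|)
        ≤ ((S1 \ S2).card : ℝ) + ((S2 \ S1).card : ℝ) := by
      have hpt : ∀ p : Fin k × Fin k,
          |(if (((A p.1 p.2 : ℕ) : ℝ) + 1) / (k:ℝ) ^ 2 ∈ V then (1:ℝ) else 0)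
            - (if Astar p.1 p.2 ∈ V then (1:ℝ) else 0)|
          ≤ (if p ∈ S1 \ S2 then (1:ℝ) else 0) + (if p ∈ S2 \ S1 then (1:ℝ) else 0) := by
        intro p
        by_cases h1 : (((A p.1 p.2 : ℕ) : ℝ) + 1) / (k:ℝ) ^ 2 ∈ V <;>
          by_cases h2 : Astar p.1 p.2 ∈ V <;>
          simp [h1, h2, Finset.mem_sdiff, hmemS1 p, hmemS2 p]
      calc (∑ p : Fin k × Fin k,
          |(if (((A p.1 p.2 : ℕ) : ℝ) + 1) / (k:ℝ) ^ 2 ∈ V then (1:ℝ) else 0)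
            - (if Astar p.1 p.2 ∈ V then (1:ℝ) else 0)|)
          ≤ ∑ p : Fin k × Fin k,
            ((if p ∈ S1 \ S2 then (1:ℝ) else 0) + (if p ∈ S2 \ S1 then (1:ℝ) else 0)) :=
            Finset.sum_le_sum fun p _ => hpt p
        _ = ((S1 \ S2).card : ℝ) + ((S2 \ S1).card : ℝ) := by
            rw [Finset.sum_add_distrib]
            congr 1 <;>
            · rw [Finset.sum_ite_mem, Finset.univ_inter, Finset.sum_const, nsmul_eq_mul, mul_one]
    -- final arithmetic
    have hb1 : ((S1 \ S2).card : ℝ) ≤ ((B2 \ B1).card : ℝ) + ((A2 \ A1).card : ℝ) := by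
      calc ((S1 \ S2).card : ℝ) ≤ (((B2 \ B1) ∪ (A2 \ A1)).card : ℝ) := by exact_mod_cast Finset.card_le_card hincl1
        _ ≤ ((B2 \ B1).card : ℝ) + ((A2 \ A1).card : ℝ) := by exact_mod_cast Finset.card_union_le _ _
    have hb2 : ((S2 \ S1).card : ℝ) ≤ ((B1 \ B2).card : ℝ) + ((A1 \ A2).card : ℝ) := by
      calc ((S2 \ S1).card : ℝ) ≤ (((B1 \ B2) ∪ (A1 \ A2)).card : ℝ) := by exact_mod_cast Finset.card_le_card hincl2
        _ ≤ ((B1 \ B2).card : ℝ) + ((A1 \ A2).card : ℝ) := by exact_mod_cast Finset.card_union_le _ _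
    have hBtot : ((B1 \ B2).card : ℝ) + ((B2 \ B1).card : ℝ) ≤ ε * (k:ℝ)^2 + 1 := by
      have h := hdiff B1 B2 hnestB
      have habs : |((B1.card : ℕ) : ℝ) - ((B2.card : ℕ) : ℝ)| ≤ 1 + ε * (k:ℝ)^2 := by
        have := abs_sub_le ((B1.card : ℕ) : ℝ) ((volume Ib).toReal * (k:ℝ)^2) ((B2.card : ℕ) : ℝ)
        rw [abs_sub_comm ((volume Ib).toReal * (k:ℝ)^2) _] at this
        linarith
      linarith
    have hAtot : ((A1 \ A2).card : ℝ) + ((A2 \ A1).card : ℝ) ≤ ε * (k:ℝ)^2 + 1 := by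
      have h := hdiff A1 A2 hnestA
      have habs : |((A1.card : ℕ) : ℝ) - ((A2.card : ℕ) : ℝ)| ≤ 1 + ε * (k:ℝ)^2 := by
        have := abs_sub_le ((A1.card : ℕ) : ℝ) ((volume Ia).toReal * (k:ℝ)^2) ((A2.card : ℕ) : ℝ)
        rw [abs_sub_comm ((volume Ia).toReal * (k:ℝ)^2) _] at this
        linarith
      linarith
    linarith
  have hcomb' : (∑ p : Fin k × Fin k, |F p.1 p.2|) ≤ 2 * ε * (k:ℝ)^2 + 2 := hcomb
  refine hred.trans ?_
  rw [div_le_iff₀ hk2]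
  have h4 : (4 / (k:ℝ)^2) * (k:ℝ)^2 = 4 := by field_simp
  calc (∑ p : Fin k × Fin k, |F p.1 p.2|) ≤ 2 * ε * (k:ℝ)^2 + 2 := hcomb'
    _ ≤ (4 * ε + 4 / (k:ℝ)^2) * (k:ℝ)^2 := by
        rw [add_mul, h4]
        nlinarith
end

section
/- (Weak regularity lemma for tuples of bigraphons) For all r, m ∈ ℕ, every m-tuple (W₁,…,W_m) of bigraphons on Ω², and every partition 𝓟* of Ω, there exists a partition 𝓟 of Ω into at most r·|𝓟*| classes refining 𝓟* such that for each i ∈ [m], the cut norm ‖W_i − (W_i)^{⋈𝓟}‖_□ < √(2m/log r), where (W_i)^{⋈𝓟} is the stepping of W_i according to 𝓟. -/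
open MeasureTheory

/-- The cut norm: `sup_{S,T ⊆ Ω measurable} |∫_{S×T} X|`. -/
noncomputable def cutNorm {Ω : Type*} [MeasurableSpace Ω] (μ : Measure Ω)
    (X : Ω → Ω → ℝ) : ℝ :=
  ⨆ S : {s : Set Ω // MeasurableSet s}, ⨆ T : {t : Set Ω // MeasurableSet t},
    |∫ x in S.1, ∫ y in T.1, X x y ∂μ ∂μ|

/-- The stepping `W^{⋈𝓟}` of a bigraphon `W` with respect to the partition of `Ω` given
by the fibres of `P : Ω → Fin N`: on the cell `A × B` it is the average of `W` over
`A × B`. -/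
noncomputable def stepping {Ω : Type*} [MeasurableSpace Ω] (μ : Measure Ω) {N : ℕ}
    (P : Ω → Fin N) (W : Ω → Ω → ℝ) : Ω → Ω → ℝ :=
  fun x y =>
    (∫ u in P ⁻¹' {P x}, ∫ v in P ⁻¹' {P y}, W u v ∂μ ∂μ) /
      ((μ (P ⁻¹' {P x})).toReal * (μ (P ⁻¹' {P y})).toReal)


/-!
Energy increment. Stepping along `P` is the orthogonal projection onto functions constant on
the cells `P ⁻¹' {a} × P ⁻¹' {b}`, so the energy `‖W^{⋈P}‖₂²` grows along refinements by
`‖W^{⋈P'} - W^{⋈P}‖₂²`. If `|∫_{S×T} (W_i - W_i^{⋈P})| > η`, refining `P` by `S` and `T`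
(four times as many classes) raises the energy of `W_i` by `η²` without lowering any other.
Starting from `𝓟*` the total energy can grow by at most `∑ Var W_i ≤ m / 4`, so after at most
`log₄ r` such refinements the partition is good. The same estimate gives `‖W_i - W_i^{⋈P}‖_□ ≤ √Var W_i ≤ 1/2`,
which settles small `r`.
-/

open ProbabilityTheory Set Function
open scoped ENNReal

section FiniteFibres

variable {X ι : Type*} [MeasurableSpace X] [Fintype ι] [MeasurableSpace ι] {ρ : Measure X}
  {π : X → ι}

lemma memLp_top_comp_of_fintype [DiscreteMeasurableSpace ι] (hπ : Measurable π) (G : ι → ℝ) :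
    MemLp (fun x => G (π x)) ∞ ρ :=
  memLp_top_of_bound (Measurable.of_discrete.comp hπ).aestronglyMeasurable (∑ i, ‖G i‖)
    (ae_of_all _ fun _ => Finset.single_le_sum (fun i _ => norm_nonneg (G i))
      (Finset.mem_univ _))

lemma integral_eq_sum_setIntegral_fiber [MeasurableSingletonClass ι] (hπ : Measurable π)
    {g : X → ℝ} (hg : Integrable g ρ) : ∫ x, g x ∂ρ = ∑ i, ∫ x in π ⁻¹' {i}, g x ∂ρ := by
  rw [← integral_iUnion_fintype (fun i => hπ (measurableSet_singleton i))
    (pairwise_disjoint_fiber π) (fun i => hg.integrableOn), ← preimage_iUnion,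
    iUnion_of_singleton, preimage_univ, setIntegral_univ]

lemma integral_comp_mul_eq_sum [DiscreteMeasurableSpace ι] (hπ : Measurable π) (G : ι → ℝ)
    {g : X → ℝ} (hg : Integrable g ρ) :
    ∫ x, G (π x) * g x ∂ρ = ∑ i, G i * ∫ x in π ⁻¹' {i}, g x ∂ρ := by
  rw [integral_eq_sum_setIntegral_fiber (g := fun x => G (π x) * g x) hπ
    (hg.mul_of_top_right (memLp_top_comp_of_fintype hπ G))]
  refine Finset.sum_congr rfl fun i _ => ?_
  rw [← integral_const_mul]
  exact setIntegral_congr_fun (hπ (measurableSet_singleton i)) fun x hx => by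
    simp only [mem_preimage, mem_singleton_iff] at hx
    simp only [hx]

end FiniteFibres

section L2

variable {X : Type*} [MeasurableSpace X] {ρ : Measure X} {a b : X → ℝ}

lemma integral_sub_sq (ha : MemLp a 2 ρ) (hb : MemLp b 2 ρ) :
    ∫ x, (a x - b x) ^ 2 ∂ρ =
      ∫ x, a x ^ 2 ∂ρ - 2 * ∫ x, a x * b x ∂ρ + ∫ x, b x ^ 2 ∂ρ := by
  have hab : Integrable (fun x => a x * b x) ρ := ha.integrable_mul hb
  have h2ab : Integrable (fun x => a x ^ 2 - 2 * (a x * b x)) ρ :=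
    ha.integrable_sq.sub (hab.const_mul 2)
  simp_rw [sub_sq, mul_assoc]
  rw [integral_add h2ab hb.integrable_sq, integral_sub ha.integrable_sq (hab.const_mul 2),
    integral_const_mul]

variable [IsProbabilityMeasure ρ]

lemma sq_integral_le_integral_sq (ha : MemLp a 2 ρ) :
    (∫ x, a x ∂ρ) ^ 2 ≤ ∫ x, a x ^ 2 ∂ρ := by
  have := variance_eq_sub ha
  simp only [Pi.pow_apply] at this
  linarith [variance_nonneg a ρ]

lemma sq_setIntegral_le_integral_sq (ha : MemLp a 2 ρ) {A : Set X} (hA : MeasurableSet A) :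
    (∫ x in A, a x ∂ρ) ^ 2 ≤ ∫ x, a x ^ 2 ∂ρ := by
  rw [← integral_indicator hA]
  refine (sq_integral_le_integral_sq (ha.indicator hA)).trans
    (integral_mono (ha.indicator hA).integrable_sq ha.integrable_sq fun x => ?_)
  by_cases hx : x ∈ A <;> simp [hx, sq_nonneg]

end L2

section Stepping

variable {Ω : Type*} [MeasurableSpace Ω] {μ : Measure Ω} {N : ℕ} {P : Ω → Fin N}
  {f : Ω → Ω → ℝ}

noncomputable def cellAverage (μ : Measure Ω) (P : Ω → Fin N) (f : Ω → Ω → ℝ)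
    (c : Fin N × Fin N) : ℝ :=
  (∫ u in P ⁻¹' {c.1}, ∫ v in P ⁻¹' {c.2}, f u v ∂μ ∂μ) /
    ((μ (P ⁻¹' {c.1})).toReal * (μ (P ⁻¹' {c.2})).toReal)

lemma stepping_eq_cellAverage (z : Ω × Ω) :
    stepping μ P f z.1 z.2 = cellAverage μ P f (Prod.map P P z) := rfl

variable [IsFiniteMeasure μ]

lemma memLp_stepping (hP : Measurable P) (f : Ω → Ω → ℝ) (p : ℝ≥0∞) :
    MemLp (fun z : Ω × Ω => stepping μ P f z.1 z.2) p (μ.prod μ) :=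
  (memLp_top_comp_of_fintype (hP.prodMap hP) (cellAverage μ P f)).mono_exponent le_top

lemma cellAverage_eq_setIntegral_div (hf : Integrable (fun z : Ω × Ω => f z.1 z.2) (μ.prod μ))
    (c : Fin N × Fin N) :
    cellAverage μ P f c = (∫ z in Prod.map P P ⁻¹' {c}, f z.1 z.2 ∂μ.prod μ) /
      (μ.prod μ).real (Prod.map P P ⁻¹' {c}) := by
  rw [← singleton_prod_singleton, preimage_prod_map_prod,
    setIntegral_prod (fun z => f z.1 z.2) hf.integrableOn,
    measureReal_def, Measure.prod_prod, ENNReal.toReal_mul]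
  rfl

lemma setIntegral_fiber_stepping (hP : Measurable P)
    (hf : Integrable (fun z : Ω × Ω => f z.1 z.2) (μ.prod μ)) (c : Fin N × Fin N) :
    ∫ z in Prod.map P P ⁻¹' {c}, stepping μ P f z.1 z.2 ∂μ.prod μ =
      ∫ z in Prod.map P P ⁻¹' {c}, f z.1 z.2 ∂μ.prod μ := by
  have hc : MeasurableSet (Prod.map P P ⁻¹' {c}) := hP.prodMap hP (measurableSet_singleton c)
  have h_const : EqOn (fun z : Ω × Ω => stepping μ P f z.1 z.2)
      (fun _ => cellAverage μ P f c) (Prod.map P P ⁻¹' {c}) :=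
    fun z (hz : Prod.map P P z = c) => by simp only [stepping_eq_cellAverage, hz]
  rw [setIntegral_congr_fun hc h_const, setIntegral_const, smul_eq_mul,
    cellAverage_eq_setIntegral_div hf, ← mul_div_assoc]
  -- a null cell makes both sides vanish, whatever `x / 0` is
  refine mul_div_cancel_left_of_imp fun h => ?_
  rw [measureReal_eq_zero_iff, ← Measure.restrict_eq_zero] at h
  rw [h, integral_zero_measure]

theorem integral_comp_mul_stepping (hP : Measurable P)
    (hf : Integrable (fun z : Ω × Ω => f z.1 z.2) (μ.prod μ)) (G : Fin N × Fin N → ℝ) :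
    ∫ z, G (Prod.map P P z) * stepping μ P f z.1 z.2 ∂μ.prod μ =
      ∫ z, G (Prod.map P P z) * f z.1 z.2 ∂μ.prod μ := by
  rw [integral_comp_mul_eq_sum (hP.prodMap hP) G ((memLp_stepping hP f 1).integrable le_rfl),
    integral_comp_mul_eq_sum (hP.prodMap hP) G hf]
  simp only [setIntegral_fiber_stepping hP hf]

theorem setIntegral_preimage_stepping (hP : Measurable P)
    (hf : Integrable (fun z : Ω × Ω => f z.1 z.2) (μ.prod μ)) (U : Set (Fin N × Fin N)) :
    ∫ z in Prod.map P P ⁻¹' U, stepping μ P f z.1 z.2 ∂μ.prod μ =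
      ∫ z in Prod.map P P ⁻¹' U, f z.1 z.2 ∂μ.prod μ := by
  have h_indicator (g : Ω × Ω → ℝ) : ∫ z in Prod.map P P ⁻¹' U, g z ∂μ.prod μ =
      ∫ z, U.indicator 1 (Prod.map P P z) * g z ∂μ.prod μ := by
    rw [← integral_indicator (hP.prodMap hP MeasurableSet.of_discrete)]
    congr 1 with z
    by_cases hz : Prod.map P P z ∈ U <;> simp [hz]
  rw [h_indicator, h_indicator]
  exact integral_comp_mul_stepping hP hf _

end Stepping

section Energy

variable {Ω : Type*} [MeasurableSpace Ω] {μ : Measure Ω} {N N' : ℕ} {P : Ω → Fin N}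
  {P' : Ω → Fin N'} {f : Ω → Ω → ℝ}

noncomputable def energy (μ : Measure Ω) (P : Ω → Fin N) (f : Ω → Ω → ℝ) : ℝ :=
  ∫ z, stepping μ P f z.1 z.2 ^ 2 ∂μ.prod μ

variable [IsFiniteMeasure μ]

lemma integral_stepping_mul_eq_energy (hP : Measurable P)
    (hf : Integrable (fun z : Ω × Ω => f z.1 z.2) (μ.prod μ)) :
    ∫ z, stepping μ P f z.1 z.2 * f z.1 z.2 ∂μ.prod μ = energy μ P f := by
  simp only [energy, sq]
  exact (integral_comp_mul_stepping hP hf (cellAverage μ P f)).symm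

lemma energy_le_integral_sq (hP : Measurable P)
    (hf : MemLp (fun z : Ω × Ω => f z.1 z.2) 2 (μ.prod μ)) :
    energy μ P f ≤ ∫ z, f z.1 z.2 ^ 2 ∂μ.prod μ := by
  have h := integral_sub_sq hf (memLp_stepping hP f 2)
  simp only [mul_comm (f _ _), integral_stepping_mul_eq_energy hP (hf.integrable one_le_two)]
    at h
  have : 0 ≤ ∫ z, (f z.1 z.2 - stepping μ P f z.1 z.2) ^ 2 ∂μ.prod μ :=
    integral_nonneg fun _ => sq_nonneg _
  rw [energy] at h ⊢
  linarith

theorem energy_eq_add_integral_sq_of_refines (hP : Measurable P) (hP' : Measurable P')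
    {c : Fin N' → Fin N} (hc : P = c ∘ P')
    (hf : Integrable (fun z : Ω × Ω => f z.1 z.2) (μ.prod μ)) :
    energy μ P' f = energy μ P f +
      ∫ z, (stepping μ P' f z.1 z.2 - stepping μ P f z.1 z.2) ^ 2 ∂μ.prod μ := by
  have h_cross : ∫ z, stepping μ P' f z.1 z.2 * stepping μ P f z.1 z.2 ∂μ.prod μ =
      energy μ P f := by
    have h := integral_comp_mul_stepping hP' hf (cellAverage μ P f ∘ Prod.map c c)
    simp only [mul_comm (stepping μ P' f _ _)]
    subst hc
    exact h.trans (integral_stepping_mul_eq_energy hP hf)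
  rw [integral_sub_sq (memLp_stepping hP' f 2) (memLp_stepping hP f 2), h_cross]
  simp only [energy]
  ring

lemma energy_le_energy_of_refines (hP : Measurable P) (hP' : Measurable P')
    {c : Fin N' → Fin N} (hc : P = c ∘ P')
    (hf : Integrable (fun z : Ω × Ω => f z.1 z.2) (μ.prod μ)) :
    energy μ P f ≤ energy μ P' f := by
  rw [energy_eq_add_integral_sq_of_refines hP hP' hc hf, le_add_iff_nonneg_right]
  exact integral_nonneg fun _ => sq_nonneg _

end Energy

section ProbabilityEnergy

variable {Ω : Type*} [MeasurableSpace Ω] {μ : Measure Ω} [IsProbabilityMeasure μ] {N N' : ℕ}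
  {P : Ω → Fin N} {P' : Ω → Fin N'} {f : Ω → Ω → ℝ}

lemma sq_integral_le_energy (hP : Measurable P)
    (hf : Integrable (fun z : Ω × Ω => f z.1 z.2) (μ.prod μ)) :
    (∫ z, f z.1 z.2 ∂μ.prod μ) ^ 2 ≤ energy μ P f := by
  have h := integral_comp_mul_stepping hP hf 1
  simp only [Pi.one_apply, one_mul] at h
  rw [← h]
  exact sq_integral_le_integral_sq (memLp_stepping hP f 2)

lemma energy_sub_energy_le_variance (hP : Measurable P) (hP' : Measurable P')
    (hf : MemLp (fun z : Ω × Ω => f z.1 z.2) 2 (μ.prod μ)) :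
    energy μ P' f - energy μ P f ≤ Var[fun z : Ω × Ω => f z.1 z.2; μ.prod μ] := by
  rw [variance_eq_sub hf]
  simp only [Pi.pow_apply]
  linarith [energy_le_integral_sq hP' hf, sq_integral_le_energy hP (hf.integrable one_le_two)]

theorem sq_setIntegral_sub_stepping_le (hP : Measurable P) (hP' : Measurable P')
    {c : Fin N' → Fin N} (hc : P = c ∘ P')
    (hf : Integrable (fun z : Ω × Ω => f z.1 z.2) (μ.prod μ)) (U : Set (Fin N' × Fin N')) :
    (∫ z in Prod.map P' P' ⁻¹' U, (f z.1 z.2 - stepping μ P f z.1 z.2) ∂μ.prod μ) ^ 2 ≤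
      energy μ P' f - energy μ P f := by
  have hs := (memLp_stepping (μ := μ) hP f 1).integrable le_rfl
  have hs' := (memLp_stepping (μ := μ) hP' f 1).integrable le_rfl
  have hU : MeasurableSet (Prod.map P' P' ⁻¹' U) := hP'.prodMap hP' MeasurableSet.of_discrete
  have h_diff :
      ∫ z in Prod.map P' P' ⁻¹' U, (f z.1 z.2 - stepping μ P f z.1 z.2) ∂μ.prod μ =
        ∫ z in Prod.map P' P' ⁻¹' U, (stepping μ P' f z.1 z.2 - stepping μ P f z.1 z.2)
          ∂μ.prod μ := by
    rw [integral_sub hf.integrableOn hs.integrableOn,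
      integral_sub hs'.integrableOn hs.integrableOn, setIntegral_preimage_stepping hP' hf]
  rw [h_diff, energy_eq_add_integral_sq_of_refines hP hP' hc hf, add_sub_cancel_left]
  exact sq_setIntegral_le_integral_sq ((memLp_stepping hP' f 2).sub (memLp_stepping hP f 2)) hU

end ProbabilityEnergy

section Refinement

variable {Ω : Type*} [MeasurableSpace Ω] {N : ℕ} {P : Ω → Fin N}

lemma exists_refinement_preimage (hP : Measurable P) {S : Set Ω} (hS : MeasurableSet S) :
    ∃ P' : Ω → Fin (N * 2), Measurable P' ∧ (∃ c : Fin (N * 2) → Fin N, P = c ∘ P') ∧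
      ∃ σ : Set (Fin (N * 2)), S = P' ⁻¹' σ := by
  classical
  have hb : Measurable fun x => if x ∈ S then (1 : Fin 2) else 0 :=
    Measurable.ite hS measurable_const measurable_const
  refine ⟨fun x => finProdFinEquiv (P x, if x ∈ S then 1 else 0),
    Measurable.of_discrete.comp (hP.prodMk hb), ⟨fun j => (finProdFinEquiv.symm j).1, ?_⟩,
    {j | (finProdFinEquiv.symm j).2 = 1}, ?_⟩
  · funext x
    simp only [comp_apply, Equiv.symm_apply_apply]
  · ext x
    by_cases hx : x ∈ S <;> simp [hx, -finProdFinEquiv_symm_apply]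

lemma exists_refinement_prod (hP : Measurable P) {S T : Set Ω} (hS : MeasurableSet S)
    (hT : MeasurableSet T) :
    ∃ P' : Ω → Fin (N * 2 * 2), Measurable P' ∧
      (∃ c : Fin (N * 2 * 2) → Fin N, P = c ∘ P') ∧
      ∃ U : Set (Fin (N * 2 * 2) × Fin (N * 2 * 2)), S ×ˢ T = Prod.map P' P' ⁻¹' U := by
  obtain ⟨P₁, hP₁, ⟨c₁, rfl⟩, σ, rfl⟩ := exists_refinement_preimage hP hS
  obtain ⟨P₂, hP₂, ⟨c₂, rfl⟩, τ, rfl⟩ := exists_refinement_preimage hP₁ hT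
  exact ⟨P₂, hP₂, ⟨c₁ ∘ c₂, rfl⟩, (c₂ ⁻¹' σ) ×ˢ τ, by rw [preimage_prod_map_prod]; rfl⟩

end Refinement

section CutNorm

variable {Ω : Type*} [MeasurableSpace Ω] {μ : Measure Ω} [IsProbabilityMeasure μ] {N : ℕ}
  {P : Ω → Fin N} {f : Ω → Ω → ℝ}

lemma exists_refinement_sq_setIntegral_le (hP : Measurable P)
    (hf : Integrable (fun z : Ω × Ω => f z.1 z.2) (μ.prod μ)) {S T : Set Ω}
    (hS : MeasurableSet S) (hT : MeasurableSet T) :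
    ∃ P' : Ω → Fin (N * 2 * 2), Measurable P' ∧
      (∃ c : Fin (N * 2 * 2) → Fin N, P = c ∘ P') ∧
      (∫ x in S, ∫ y in T, (f x y - stepping μ P f x y) ∂μ ∂μ) ^ 2 ≤
        energy μ P' f - energy μ P f := by
  obtain ⟨P', hP', ⟨c, hc⟩, U, hU⟩ := exists_refinement_prod hP hS hT
  refine ⟨P', hP', ⟨c, hc⟩, ?_⟩
  rw [← setIntegral_prod (fun z => f z.1 z.2 - stepping μ P f z.1 z.2)
    (hf.sub ((memLp_stepping hP f 1).integrable le_rfl)).integrableOn, hU]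
  exact sq_setIntegral_sub_stepping_le hP hP' hc hf U

theorem cutNorm_sub_stepping_le_sqrt_variance (hP : Measurable P)
    (hf : MemLp (fun z : Ω × Ω => f z.1 z.2) 2 (μ.prod μ)) :
    cutNorm μ (fun x y => f x y - stepping μ P f x y) ≤
      √(Var[fun z : Ω × Ω => f z.1 z.2; μ.prod μ]) := by
  refine Real.iSup_le (fun S => Real.iSup_le (fun T => Real.abs_le_sqrt ?_)
    (Real.sqrt_nonneg _)) (Real.sqrt_nonneg _)
  obtain ⟨P', hP', -, h⟩ :=
    exists_refinement_sq_setIntegral_le hP (hf.integrable one_le_two) S.2 T.2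
  exact h.trans (energy_sub_energy_le_variance hP hP' hf)

variable {m : ℕ} {W : Fin m → Ω → Ω → ℝ}

theorem exists_refinement_add_sq_le_sum_energy
    (hW : ∀ i, Integrable (fun z : Ω × Ω => W i z.1 z.2) (μ.prod μ)) (hP : Measurable P)
    {η : ℝ} (hη : 0 ≤ η) {i₀ : Fin m}
    (hi₀ : η < cutNorm μ (fun x y => W i₀ x y - stepping μ P (W i₀) x y)) :
    ∃ P' : Ω → Fin (N * 2 * 2), Measurable P' ∧
      (∃ c : Fin (N * 2 * 2) → Fin N, P = c ∘ P') ∧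
      ∑ i, energy μ P (W i) + η ^ 2 ≤ ∑ i, energy μ P' (W i) := by
  obtain ⟨S, hS⟩ := exists_lt_of_lt_ciSup hi₀
  obtain ⟨T, hT⟩ := exists_lt_of_lt_ciSup hS
  obtain ⟨P', hP', ⟨c, hc⟩, h⟩ := exists_refinement_sq_setIntegral_le hP (hW i₀) S.2 T.2
  refine ⟨P', hP', ⟨c, hc⟩, ?_⟩
  have h_gain : η ^ 2 ≤ energy μ P' (W i₀) - energy μ P (W i₀) :=
    (pow_le_pow_left₀ hη hT.le 2).trans (by rwa [sq_abs])
  have h_mono (i : Fin m) : 0 ≤ energy μ P' (W i) - energy μ P (W i) :=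
    sub_nonneg.2 (energy_le_energy_of_refines hP hP' hc (hW i))
  have h_sum := Finset.single_le_sum (fun i _ => h_mono i) (Finset.mem_univ i₀)
  rw [Finset.sum_sub_distrib] at h_sum
  linarith

theorem exists_partition_cutNorm_lt_or_add_mul_sq_le_sum_energy
    (hW : ∀ i, Integrable (fun z : Ω × Ω => W i z.1 z.2) (μ.prod μ)) {p : ℕ}
    {Q : Ω → Fin p} (hQ : Measurable Q) {η ε : ℝ} (hη : 0 ≤ η) (hηε : η < ε) (k : ℕ) :
    ∃ N ≤ 4 ^ k * p, ∃ P : Ω → Fin N, Measurable P ∧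
      (∃ c : Fin N → Fin p, Q = c ∘ P) ∧
      ((∀ i, cutNorm μ (fun x y => W i x y - stepping μ P (W i) x y) < ε) ∨
        ∑ i, energy μ Q (W i) + k * η ^ 2 ≤ ∑ i, energy μ P (W i)) := by
  induction k with
  | zero => exact ⟨p, by simp, Q, hQ, ⟨id, rfl⟩, Or.inr (by simp)⟩
  | succ k ih =>
    obtain ⟨N, hN, P, hP, ⟨c, hc⟩, h⟩ := ih
    by_cases hgood : ∀ i, cutNorm μ (fun x y => W i x y - stepping μ P (W i) x y) < ε
    · refine ⟨N, hN.trans ?_, P, hP, ⟨c, hc⟩, Or.inl hgood⟩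
      exact Nat.mul_le_mul_right p (Nat.pow_le_pow_right (by norm_num) k.le_succ)
    obtain ⟨i₀, hi₀⟩ := not_forall.mp hgood
    obtain ⟨P', hP', ⟨c', rfl⟩, h'⟩ :=
      exists_refinement_add_sq_le_sum_energy hW hP hη (hηε.trans_le (not_lt.mp hi₀))
    refine ⟨N * 2 * 2, ?_, P', hP', ⟨c ∘ c', by rw [hc]; rfl⟩, Or.inr ?_⟩
    · have : 4 ^ (k + 1) * p = 4 * (4 ^ k * p) := by ring
      omega
    · push_cast
      linarith [h.resolve_left hgood]

end CutNorm

lemma log_four_lt_two : Real.log 4 < 2 := by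
  rw [show (4 : ℝ) = 2 ^ 2 by norm_num, Real.log_pow]
  push_cast
  linarith [Real.log_two_lt_d9]

lemma log_lt_four_mul_nat_log_four {r : ℕ} (hr : 4 ≤ r) : Real.log r < 4 * Nat.log 4 r := by
  have hK : (1 : ℝ) ≤ Nat.log 4 r := by
    exact_mod_cast Nat.le_log_of_pow_le (by norm_num) (by simpa using hr)
  have hr_lt : (r : ℝ) < 4 ^ (Nat.log 4 r + 1) := by
    exact_mod_cast Nat.lt_pow_succ_log_self (by norm_num) r
  calc Real.log r < Real.log (4 ^ (Nat.log 4 r + 1)) :=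
        Real.log_lt_log (by positivity) hr_lt
    _ = (Nat.log 4 r + 1) * Real.log 4 := by rw [Real.log_pow]; push_cast; ring
    _ ≤ 4 * Nat.log 4 r := by
        nlinarith [log_four_lt_two, Real.log_nonneg (show (1 : ℝ) ≤ 4 by norm_num)]

lemma exists_lt_sqrt_two_mul_div_log {r m : ℕ} (hm : 0 < m) (hr : 1 < r)
    (h : 2 * m / Real.log r ≤ 1 / 4) :
    ∃ η, 0 ≤ η ∧ η < √(2 * m / Real.log r) ∧ m / 4 < Nat.log 4 r * η ^ 2 := by
  have hlog : 0 < Real.log r := Real.log_pos (by exact_mod_cast hr)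
  have hm' : (1 : ℝ) ≤ m := by exact_mod_cast hm
  have h4r : 4 ≤ r := by
    by_contra! hr4
    have : Real.log r ≤ Real.log 4 :=
      Real.log_le_log (by positivity) (by exact_mod_cast hr4.le)
    rw [div_le_iff₀ hlog] at h
    linarith [log_four_lt_two]
  have hK := log_lt_four_mul_nat_log_four h4r
  obtain ⟨t, ht, ht'⟩ : ∃ t, (m : ℝ) / (4 * Nat.log 4 r) < t ∧ t < 2 * m / Real.log r := by
    refine exists_between ?_
    rw [div_lt_div_iff₀ (by linarith) hlog]
    nlinarith
  have ht0 : 0 < t := lt_of_le_of_lt (by positivity) ht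
  refine ⟨√t, Real.sqrt_nonneg t, Real.sqrt_lt_sqrt ht0.le ht', ?_⟩
  rw [Real.sq_sqrt ht0.le]
  rw [div_lt_iff₀ (by linarith)] at ht
  linarith

/-- Weak regularity lemma for tuples of bigraphons: for all `r, m ∈ ℕ`
(`r ≥ 2` so that `log r > 0`), every `m`-tuple of bigraphons `W₁,…,W_m` on `Ω²`, and
every partition `𝓟*` of `Ω` (given as a measurable map `Q : Ω → Fin p`), there is a
partition `𝓟` of `Ω` into at most `r·p` classes refining `𝓟*` such that
`‖W_i − (W_i)^{⋈𝓟}‖_□ < √(2m/log r)` for each `i`. -/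
theorem weak_regularity_tuples {Ω : Type*} [MeasurableSpace Ω]
    (μ : Measure Ω) [IsProbabilityMeasure μ]
    (r m : ℕ) (hr : 1 < r) (W : Fin m → Ω → Ω → ℝ)
    (hWmeas : ∀ i, Measurable (Function.uncurry (W i)))
    (hW01 : ∀ i x y, W i x y ∈ Set.Icc (0:ℝ) 1)
    (p : ℕ) (Q : Ω → Fin p) (hQ : Measurable Q) :
    ∃ N : ℕ, N ≤ r * p ∧
      ∃ P : Ω → Fin N, Measurable P ∧
        (∃ c : Fin N → Fin p, Q = c ∘ P) ∧
        ∀ i, cutNorm μ (fun x y => W i x y - stepping μ P (W i) x y)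
              < Real.sqrt (2 * m / Real.log r) := by
  have hW01' (i : Fin m) : ∀ᵐ z ∂μ.prod μ, W i z.1 z.2 ∈ Icc (0 : ℝ) 1 :=
    ae_of_all _ fun z => hW01 i z.1 z.2
  have hW2 (i : Fin m) : MemLp (fun z : Ω × Ω => W i z.1 z.2) 2 (μ.prod μ) :=
    memLp_of_bounded (hW01' i) (hWmeas i).aestronglyMeasurable 2
  have hVar (i : Fin m) : Var[fun z : Ω × Ω => W i z.1 z.2; μ.prod μ] ≤ 1 / 4 :=
    (variance_le_sq_of_bounded (hW01' i) (hWmeas i).aemeasurable).trans_eq (by norm_num)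
  by_cases hQ_good : ∀ i, cutNorm μ (fun x y => W i x y - stepping μ Q (W i) x y) <
      √(2 * m / Real.log r)
  · exact ⟨p, Nat.le_mul_of_pos_left p (by omega), Q, hQ, ⟨id, rfl⟩, hQ_good⟩
  obtain ⟨i₀, hi₀⟩ := not_forall.mp hQ_good
  have hε : √(2 * m / Real.log r) ≤ √(1 / 4) := (not_lt.mp hi₀).trans
    ((cutNorm_sub_stepping_le_sqrt_variance hQ (hW2 i₀)).trans (Real.sqrt_le_sqrt (hVar i₀)))
  obtain ⟨η, hη, hηε, hηK⟩ := exists_lt_sqrt_two_mul_div_log i₀.pos hr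
    ((Real.sqrt_le_sqrt_iff (by norm_num)).mp hε)
  obtain ⟨N, hN, P, hP, hQP, h_good | h_energy⟩ :=
    exists_partition_cutNorm_lt_or_add_mul_sq_le_sum_energy
      (fun i => (hW2 i).integrable one_le_two) hQ hη hηε (Nat.log 4 r)
  · exact ⟨N, hN.trans (Nat.mul_le_mul_right p (Nat.pow_log_le_self 4 (by omega))), P, hP,
      hQP, h_good⟩
  have h_budget : ∑ i, energy μ P (W i) - ∑ i, energy μ Q (W i) ≤ m / 4 := by
    rw [← Finset.sum_sub_distrib]
    calc _ ≤ ∑ _i : Fin m, (1 / 4 : ℝ) := Finset.sum_le_sum fun i _ =>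
          (energy_sub_energy_le_variance hQ hP (hW2 i)).trans (hVar i)
      _ = m / 4 := by simp [div_eq_mul_inv]
  linarith
end
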